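/- Let V be an n-dimensional real vector space and let (F,G,H) and (F',G',H') be two transverse triples of complete flags in V such that T_{i,j,k}(F,G,H) = T_{i,j,k}(F',G',H') for all integers i,j,k ≥ 1 with i+j+k = n. Then there exists an invertible linear automorphism u of V with u(F^(m)) = F'^(m), u(G^(m)) = G'^(m), and u(H^(m)) = H'^(m) for all 0 ≤ m ≤ n. -/

import Mathlib

/-- `F` is a complete flag in an `n`-dimensional real vector space:
`F 0 ⊆ F 1 ⊆ ⋯ ⊆ F n` with `dim (F l) = l` for `0 ≤ l ≤ n`. -/
def IsFlag (n : ℕ) {V : Type*} [AddCommGroup V] [Module ℝ V]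
    (F : ℕ → Submodule ℝ V) : Prop :=
  (∀ l, l < n → F l ≤ F (l + 1)) ∧ ∀ l, l ≤ n → Module.finrank ℝ (F l) = l

/-- A triple of flags is transverse if `F a + G b + H c = V` whenever `a + b + c = n`. -/
def TransverseTriple (n : ℕ) {V : Type*} [AddCommGroup V] [Module ℝ V]
    (F G H : ℕ → Submodule ℝ V) : Prop :=
  ∀ a b c : ℕ, a + b + c = n → F a ⊔ G b ⊔ H c = ⊤

/-- A pair of flags is transverse if `F a + G (n - a) = V` for all `0 ≤ a ≤ n`. -/
def TransversePair (n : ℕ) {V : Type*} [AddCommGroup V] [Module ℝ V]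
    (F G : ℕ → Submodule ℝ V) : Prop :=
  ∀ a, a ≤ n → F a ⊔ G (n - a) = ⊤

/-- `A` is the `(i,j,k)`-eruption endomorphism of the triple `(F,G,H)`: it acts as the
scalar `(n - i)/n` on `F i` and as the scalar `-i/n` on `G j + H k`. -/
def IsEruption (n i j k : ℕ) {V : Type*} [AddCommGroup V] [Module ℝ V]
    (F G H : ℕ → Submodule ℝ V) (A : Module.End ℝ V) : Prop :=
  (∀ v ∈ F i, A v = (((n : ℝ) - (i : ℝ)) / (n : ℝ)) • v) ∧
  (∀ v ∈ G j ⊔ H k, A v = (-(i : ℝ) / (n : ℝ)) • v)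

/-- `A` is the `(i, n-i)`-shearing endomorphism of the pair `(F,G)`: it acts as the
scalar `(n - i)/n` on `F i` and as the scalar `-i/n` on `G (n - i)`. -/
def IsShearing (n i : ℕ) {V : Type*} [AddCommGroup V] [Module ℝ V]
    (F G : ℕ → Submodule ℝ V) (A : Module.End ℝ V) : Prop :=
  (∀ v ∈ F i, A v = (((n : ℝ) - (i : ℝ)) / (n : ℝ)) • v) ∧
  (∀ v ∈ G (n - i), A v = (-(i : ℝ) / (n : ℝ)) • v)

/-- `f` (whose values `f 0, …, f (n-1)` matter) is a basis adapted to the flag `F`: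
`F l` is the span of `f 0, …, f (l-1)` for all `0 ≤ l ≤ n`. -/
def Adapted (n : ℕ) {V : Type*} [AddCommGroup V] [Module ℝ V]
    (F : ℕ → Submodule ℝ V) (f : ℕ → V) : Prop :=
  ∀ l, l ≤ n → F l = Submodule.span ℝ (f '' Set.Iio l)

/-- `F^(a) ∧ G^(b) ∧ H^(c) := ω (f 0, …, f (a-1), g 0, …, g (b-1), h 0, …, h (c-1))`,
for `a + b + c = n`. -/
noncomputable def wedge (n : ℕ) {V : Type*} [AddCommGroup V] [Module ℝ V]
    (ω : AlternatingMap ℝ V ℝ (Fin n)) (f g h : ℕ → V) (a b c : ℕ) : ℝ :=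
  ω fun l : Fin n =>
    if (l : ℕ) < a then f (l : ℕ)
    else if (l : ℕ) < a + b then g ((l : ℕ) - a)
    else h ((l : ℕ) - a - b)

/-- The triple ratio `T_{i,j,k}(F,G,H)` computed with adapted bases `f, g, h` of the
flags `F, G, H` and the nonzero alternating `n`-form `ω`. -/
noncomputable def tripleRatio (n : ℕ) {V : Type*} [AddCommGroup V] [Module ℝ V]
    (ω : AlternatingMap ℝ V ℝ (Fin n)) (f g h : ℕ → V) (i j k : ℕ) : ℝ :=
  (wedge n ω f g h (i + 1) j (k - 1) / wedge n ω f g h (i + 1) (j - 1) k) *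
  (wedge n ω f g h (i - 1) (j + 1) k / wedge n ω f g h i (j + 1) (k - 1)) *
  (wedge n ω f g h i (j - 1) (k + 1) / wedge n ω f g h (i - 1) j (k + 1))

/-!
Both triples are first normalised by frames. For a transverse triple, the lines
`F (a + 1) ⊓ G (n - a)` give a basis adapted to `F` and, read backwards, to `G`; rescaling it so
that its sum spans `H 1` leaves no freedom but a common scalar. The linear map matching the two
frames carries `F`, `G`, `H 1` to `F'`, `G'`, `H' 1` and preserves triple ratios, so it remains
to show that `F`, `G`, `H 1` and the triple ratios determine `H`.

Suppose `H` and `H'` agree up to level `m`, and take adapted bases `h`, `h'` agreeing below `m`.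
In `T_{i,j,m}` only the third factor sees level `m + 1`, so the wedges `F^a ∧ G^b ∧ H^(m+1)`
(`a + b + m + 1 = n`) of the two triples are proportional, with a factor `t`. Hence
`h' m - t • h m` lies in every hyperplane `F^a + G^b + H^m`, and these intersect in `H^m`;
thus `H' (m + 1) = H (m + 1)`.
-/

section

open Module Submodule Set

variable {n : ℕ} {V : Type*}

section WedgeFamily

variable {f g h : ℕ → V} {a b c : ℕ}

-- `wedge` never reads its last argument: the `h`-block fills the remaining `n - a - b` slots.
def wedgeFamily (n : ℕ) (f g h : ℕ → V) (a b : ℕ) : Fin n → V := fun l =>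
  if (l : ℕ) < a then f l else if (l : ℕ) < a + b then g (l - a) else h (l - a - b)

lemma range_wedgeFamily (habc : a + b + c = n) :
    range (wedgeFamily n f g h a b) = f '' Iio a ∪ g '' Iio b ∪ h '' Iio c := by
  ext x
  simp only [wedgeFamily, mem_range, mem_union, mem_image, mem_Iio]
  constructor
  · rintro ⟨l, rfl⟩
    split_ifs with h₁ h₂
    · exact Or.inl (Or.inl ⟨l, h₁, rfl⟩)
    · exact Or.inl (Or.inr ⟨l - a, by omega, rfl⟩)
    · exact Or.inr ⟨l - a - b, by omega, rfl⟩
  · rintro ((⟨q, hq, rfl⟩ | ⟨q, hq, rfl⟩) | ⟨q, hq, rfl⟩)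
    · exact ⟨⟨q, by omega⟩, by simp [hq]⟩
    · exact ⟨⟨a + q, by omega⟩, by simp [show a + q - a = q by omega, hq]⟩
    · exact ⟨⟨a + b + q, by omega⟩, by
        simp [show ¬ a + b + q < a by omega, show a + b + q - a - b = q by omega]⟩

lemma wedgeFamily_congr {h' : ℕ → V} (hh : ∀ q, a + b + q < n → h q = h' q) :
    wedgeFamily n f g h a b = wedgeFamily n f g h' a b := by
  ext l
  simp only [wedgeFamily]
  split_ifs
  · rfl
  · rfl
  · exact hh _ (by omega)

lemma wedgeFamily_update (hc : a + b + c < n) (x : V) :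
    wedgeFamily n f g (Function.update h c x) a b =
      Function.update (wedgeFamily n f g h a b) ⟨a + b + c, hc⟩ x := by
  ext l
  rcases eq_or_ne l ⟨a + b + c, hc⟩ with rfl | hl
  · simp [wedgeFamily, show ¬ a + b + c < a by omega, show a + b + c - a - b = c by omega]
  · have hl' : (l : ℕ) ≠ a + b + c := fun h => hl (Fin.ext h)
    simp only [wedgeFamily, Function.update_of_ne hl]
    split_ifs
    · rfl
    · rfl
    · exact Function.update_of_ne (by omega) _ _

lemma wedgeFamily_comp (φ : V → V) :
    wedgeFamily n (φ ∘ f) (φ ∘ g) (φ ∘ h) a b = φ ∘ wedgeFamily n f g h a b := by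
  ext l
  simp only [wedgeFamily, Function.comp_apply]
  split_ifs <;> rfl

end WedgeFamily

variable [AddCommGroup V] [Module ℝ V]

namespace IsFlag

variable {F : ℕ → Submodule ℝ V}

lemma mono (hF : IsFlag n F) {a b : ℕ} (hab : a ≤ b) (hb : b ≤ n) : F a ≤ F b := by
  induction b, hab using Nat.le_induction with
  | base => exact le_rfl
  | succ b _ ih => exact (ih (by omega)).trans (hF.1 b (by omega))

lemma bot_eq [FiniteDimensional ℝ V] (hF : IsFlag n F) : F 0 = ⊥ :=
  Submodule.finrank_eq_zero.mp (hF.2 0 (Nat.zero_le n))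

lemma top_eq [FiniteDimensional ℝ V] (hV : finrank ℝ V = n) (hF : IsFlag n F) : F n = ⊤ :=
  Submodule.eq_top_of_finrank_eq (by rw [hF.2 n le_rfl, hV])

lemma adapted_iff [FiniteDimensional ℝ V] (hF : IsFlag n F) {f : ℕ → V} :
    Adapted n F f ↔ ∀ a < n, f a ∈ F (a + 1) ∧ f a ∉ F a := by
  constructor
  · intro hf a ha
    have hspan : F (a + 1) = F a ⊔ span ℝ {f a} := by
      rw [hf (a + 1) ha, hf a ha.le, Iio_add_one_eq_Iic, ← Iio_insert, image_insert_eq,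
        span_insert, sup_comm]
    refine ⟨hspan ▸ mem_sup_right (mem_span_singleton_self _), fun hmem => ?_⟩
    have := hF.2 (a + 1) ha
    rw [hspan, sup_eq_left.mpr ((span_singleton_le_iff_mem _ _).mpr hmem), hF.2 a ha.le] at this
    omega
  · intro hf l
    induction l with
    | zero => intro; simp [hF.bot_eq]
    | succ l ih =>
      intro hl
      obtain ⟨hmem, hnotmem⟩ := hf l (by omega)
      rw [Iio_add_one_eq_Iic, ← Iio_insert, image_insert_eq, span_insert, ← ih (by omega),
        sup_comm]
      refine (eq_of_le_of_finrank_eq (sup_le (hF.1 l (by omega))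
        ((span_singleton_le_iff_mem _ _).mpr hmem)) ?_).symm
      rw [finrank_sup_span_singleton hnotmem, hF.2 l (by omega), hF.2 (l + 1) hl]

lemma exists_adapted [FiniteDimensional ℝ V] (hF : IsFlag n F) :
    ∃ f : ℕ → V, Adapted n F f := by
  have hstep : ∀ a, ∃ v : V, a < n → v ∈ F (a + 1) ∧ v ∉ F a := by
    intro a
    by_cases ha : a < n
    · have hlt : F a < F (a + 1) := lt_of_le_of_ne (hF.1 a ha) fun heq => by
        have := congrArg (fun W : Submodule ℝ V => finrank ℝ W) heq
        simp only [hF.2 a ha.le, hF.2 (a + 1) ha] at this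
        omega
      obtain ⟨v, hv, hv'⟩ := SetLike.exists_of_lt hlt
      exact ⟨v, fun _ => ⟨hv, hv'⟩⟩
    · exact ⟨0, fun h => absurd h ha⟩
  choose f hf using hstep
  exact ⟨f, hF.adapted_iff.mpr hf⟩

lemma exists_adapted_eqOn [FiniteDimensional ℝ V] {H : ℕ → Submodule ℝ V}
    (hF : IsFlag n F) (hH : IsFlag n H) {m : ℕ} (hle : ∀ l ≤ m, F l = H l) {f : ℕ → V}
    (hf : Adapted n F f) :
    ∃ h : ℕ → V, Adapted n H h ∧ EqOn f h (Iio m) := by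
  obtain ⟨h₀, hh₀⟩ := hH.exists_adapted
  refine ⟨fun q => if q < m then f q else h₀ q, hH.adapted_iff.mpr fun a ha => ?_,
    fun q hq => (if_pos hq).symm⟩
  by_cases ham : a < m
  · simp only [if_pos ham, ← hle (a + 1) ham, ← hle a ham.le]
    exact hF.adapted_iff.mp hf a ha
  · simp only [if_neg ham]
    exact hH.adapted_iff.mp hh₀ a ha

lemma map (hF : IsFlag n F) (u : V ≃ₗ[ℝ] V) :
    IsFlag n fun m => Submodule.map (u : V →ₗ[ℝ] V) (F m) :=
  ⟨fun l hl => map_mono (hF.1 l hl), fun l hl => by rw [LinearEquiv.finrank_map_eq, hF.2 l hl]⟩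

end IsFlag

namespace Adapted

variable {F F' : ℕ → Submodule ℝ V} {f f' : ℕ → V}

lemma map_eq (hf : Adapted n F f) (hf' : Adapted n F' f') {u : V →ₗ[ℝ] V}
    (hu : ∀ a < n, u (f a) = f' a) {m : ℕ} (hm : m ≤ n) : Submodule.map u (F m) = F' m := by
  rw [hf m hm, hf' m hm, map_span, image_image]
  exact congrArg _ (image_congr fun a ha => hu a (lt_of_lt_of_le ha hm))

lemma symm_comp (u : V ≃ₗ[ℝ] V)
    (hF : ∀ m ≤ n, Submodule.map (u : V →ₗ[ℝ] V) (F m) = F' m) (hf : Adapted n F' f) :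
    Adapted n F (u.symm ∘ f) := by
  intro l hl
  rw [← (map_symm_eq_iff u).mpr (hF l hl), hf l hl, map_span, image_comp]
  rfl

lemma top_le_span [FiniteDimensional ℝ V] (hV : finrank ℝ V = n) (hF : IsFlag n F)
    (hf : Adapted n F f) : ⊤ ≤ span ℝ (f '' Iio n) := by
  rw [← hf n le_rfl, hF.top_eq hV]

end Adapted

lemma TransverseTriple.of_map_eq {F G H F' G' H' : ℕ → Submodule ℝ V} (u : V ≃ₗ[ℝ] V)
    (hT : TransverseTriple n F G H)
    (hF : ∀ m ≤ n, Submodule.map (u : V →ₗ[ℝ] V) (F m) = F' m)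
    (hG : ∀ m ≤ n, Submodule.map (u : V →ₗ[ℝ] V) (G m) = G' m)
    (hH : ∀ m ≤ n, Submodule.map (u : V →ₗ[ℝ] V) (H m) = H' m) :
    TransverseTriple n F' G' H' := by
  intro a b c habc
  rw [← hF a (by omega), ← hG b (by omega), ← hH c (by omega), ← Submodule.map_sup,
    ← Submodule.map_sup, hT a b c habc, Submodule.map_top, LinearEquiv.range]

lemma exists_basis_eq_of_top_le_span [FiniteDimensional ℝ V] (hV : finrank ℝ V = n)
    {e : ℕ → V} (he : ⊤ ≤ span ℝ (e '' Iio n)) :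
    ∃ b : Basis (Fin n) ℝ V, ∀ i, b i = e i := by
  have hrange : range (fun i : Fin n => e i) = e '' Iio n := by
    rw [← Fin.range_val, ← range_comp]
    rfl
  exact ⟨basisOfTopLeSpanOfCardEqFinrank _ (hrange ▸ he) (by simp [hV]), fun i => by simp⟩

lemma exists_linearEquiv_apply_eq [FiniteDimensional ℝ V] (hV : finrank ℝ V = n)
    {e e' : ℕ → V} (he : ⊤ ≤ span ℝ (e '' Iio n)) (he' : ⊤ ≤ span ℝ (e' '' Iio n)) :
    ∃ u : V ≃ₗ[ℝ] V, ∀ a < n, u (e a) = e' a := by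
  obtain ⟨b, hb⟩ := exists_basis_eq_of_top_le_span hV he
  obtain ⟨b', hb'⟩ := exists_basis_eq_of_top_le_span hV he'
  refine ⟨b.equiv b' (Equiv.refl _), fun a ha => ?_⟩
  simpa [hb, hb'] using b.equiv_apply ⟨a, ha⟩ b' (Equiv.refl _)

namespace TransverseTriple

variable [FiniteDimensional ℝ V] {F G H : ℕ → Submodule ℝ V}

lemma finrank_sup (hV : finrank ℝ V = n) (hF : IsFlag n F) (hG : IsFlag n G) (hH : IsFlag n H)
    (hT : TransverseTriple n F G H) {a b c : ℕ} (habc : a + b + c ≤ n) :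
    finrank ℝ ↥(F a ⊔ G b ⊔ H c) = a + b + c := by
  have hX_le : finrank ℝ ↥(F a ⊔ G b ⊔ H c) ≤ a + b + c := by
    have h1 := finrank_add_le_finrank_add_finrank (F a ⊔ G b) (H c)
    have h2 := finrank_add_le_finrank_add_finrank (F a) (G b)
    rw [hF.2 a (by omega), hG.2 b (by omega)] at h2
    rw [hH.2 c (by omega)] at h1
    omega
  have htop : F (n - b - c) ⊔ (F a ⊔ G b ⊔ H c) = ⊤ := by
    refine top_le_iff.mp ?_
    rw [← hT (n - b - c) b c (by omega), sup_assoc]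
    exact sup_le_sup_left (sup_le_sup_right le_sup_right _) _
  have hinf : F a ≤ F (n - b - c) ⊓ (F a ⊔ G b ⊔ H c) :=
    le_inf (hF.mono (by omega) (by omega)) (le_sup_left.trans le_sup_left)
  have hsum := finrank_sup_add_finrank_inf_eq (F (n - b - c)) (F a ⊔ G b ⊔ H c)
  have hmono := Submodule.finrank_mono hinf
  rw [htop, finrank_top, hV, hF.2 _ (by omega)] at hsum
  rw [hF.2 a (by omega)] at hmono
  omega

lemma inf_sup_eq_bot (hV : finrank ℝ V = n) (hF : IsFlag n F) (hG : IsFlag n G)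
    (hH : IsFlag n H) (hT : TransverseTriple n F G H) {a b c : ℕ} (habc : a + b + c = n) :
    F a ⊓ (G b ⊔ H c) = ⊥ := by
  have hGH := hT.finrank_sup hV hF hG hH (a := 0) (b := b) (c := c) (by omega)
  rw [hF.bot_eq, bot_sup_eq] at hGH
  have hsum := finrank_sup_add_finrank_inf_eq (F a) (G b ⊔ H c)
  rw [← sup_assoc, hT a b c habc, finrank_top, hV, hF.2 a (by omega), hGH] at hsum
  exact Submodule.finrank_eq_zero.mp (by omega)

lemma mem_of_forall_mem_sup (hV : finrank ℝ V = n) (hF : IsFlag n F) (hG : IsFlag n G)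
    (hH : IsFlag n H) (hT : TransverseTriple n F G H) {m N : ℕ} (hN : N + m + 1 = n) {x : V}
    (hx : ∀ a ≤ N, x ∈ F a ⊔ G (N - a) ⊔ H m) : x ∈ H m := by
  suffices h : ∀ a ≤ N, x ∈ G (N - a) ⊔ H m by
    simpa [hG.bot_eq] using h N le_rfl
  intro a
  induction a with
  | zero => simpa [hF.bot_eq] using hx 0 (Nat.zero_le N)
  | succ a ih =>
    intro ha
    have hle : G (N - (a + 1)) ⊔ H m ≤ G (N - a) ⊔ H m :=
      sup_le_sup_right (hG.mono (by omega) (by omega)) _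
    have hmod := sup_inf_assoc_of_le (F (a + 1)) hle
    rw [hT.inf_sup_eq_bot hV hF hG hH (by omega), sup_bot_eq] at hmod
    rw [← hmod]
    refine mem_inf.mpr ⟨?_, ih (by omega)⟩
    have := hx (a + 1) ha
    rwa [sup_assoc, sup_comm] at this

lemma adapted_of_mem_inf (hV : finrank ℝ V = n) (hF : IsFlag n F) (hG : IsFlag n G)
    (hH : IsFlag n H) (hT : TransverseTriple n F G H) {e : ℕ → V}
    (he : ∀ a < n, e a ∈ F (a + 1) ⊓ G (n - a) ∧ e a ≠ 0) :
    Adapted n F e ∧ Adapted n G (fun q => e (n - 1 - q)) := by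
  have hpair : ∀ a ≤ n, F a ⊓ G (n - a) = ⊥ := fun a ha => by
    simpa [hH.bot_eq] using hT.inf_sup_eq_bot hV hF hG hH (a := a) (b := n - a) (c := 0) (by omega)
  refine ⟨hF.adapted_iff.mpr fun a ha => ⟨(he a ha).1.1, fun hmem => (he a ha).2 ?_⟩,
    hG.adapted_iff.mpr fun q hq => ⟨?_, fun hmem => (he (n - 1 - q) (by omega)).2 ?_⟩⟩
  · exact (mem_bot ℝ).mp (hpair a ha.le ▸ mem_inf.mpr ⟨hmem, (he a ha).1.2⟩)
  · simpa [show n - (n - 1 - q) = q + 1 by omega] using (he (n - 1 - q) (by omega)).1.2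
  · have hF' : e (n - 1 - q) ∈ F (n - q) := by
      simpa [show n - 1 - q + 1 = n - q by omega] using (he (n - 1 - q) (by omega)).1.1
    have hpq := hpair (n - q) (by omega)
    rw [show n - (n - q) = q by omega] at hpq
    exact (mem_bot ℝ).mp (hpq ▸ mem_inf.mpr ⟨hF', hmem⟩)

lemma exists_frame (hV : finrank ℝ V = n) (hn : 0 < n) (hF : IsFlag n F) (hG : IsFlag n G)
    (hH : IsFlag n H) (hT : TransverseTriple n F G H) :
    ∃ e : ℕ → V, Adapted n F e ∧ Adapted n G (fun q => e (n - 1 - q)) ∧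
      H 1 = span ℝ {∑ a ∈ Finset.range n, e a} := by
  have hline : ∀ a, ∃ v : V, a < n → v ∈ F (a + 1) ⊓ G (n - a) ∧ v ≠ 0 := by
    intro a
    by_cases ha : a < n
    · have hsum := finrank_sup_add_finrank_inf_eq (F (a + 1)) (G (n - a))
      have hle := (F (a + 1) ⊔ G (n - a)).finrank_le
      rw [hF.2 _ ha, hG.2 _ (by omega)] at hsum
      have hne : F (a + 1) ⊓ G (n - a) ≠ ⊥ := fun hbot => by
        rw [hbot, finrank_bot] at hsum
        omega
      obtain ⟨v, hv, hv0⟩ := exists_mem_ne_zero_of_ne_bot hne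
      exact ⟨v, fun _ => ⟨hv, hv0⟩⟩
    · exact ⟨0, fun h => absurd h ha⟩
  choose e₀ he₀ using hline
  obtain ⟨b, hb⟩ := exists_basis_eq_of_top_le_span hV
    ((hT.adapted_of_mem_inf hV hF hG hH he₀).1.top_le_span hV hF)
  obtain ⟨h, hh⟩ := hH.exists_adapted
  have hH1 : H 1 = span ℝ {h 0} := by
    rw [hh 1 hn, show Iio (1 : ℕ) = {0} by ext; simp, image_singleton]
  -- a vanishing coordinate would put `H 1` inside `F i ⊔ G (n - 1 - i)`, of dimension `n - 1`
  have hcoord : ∀ i : Fin n, b.repr (h 0) i ≠ 0 := by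
    intro i hi
    have hw : h 0 ∈ F i ⊔ G (n - 1 - i) := by
      refine span_le.mpr ?_ (b.mem_span_image.mpr fun j hj => ?_ : h 0 ∈ span ℝ (b '' {i}ᶜ))
      · rintro _ ⟨j, hj, rfl⟩
        rw [hb]
        rcases lt_or_gt_of_ne (Fin.val_ne_of_ne hj) with hlt | hgt
        · exact mem_sup_left (hF.mono (by omega) (by omega) (he₀ j j.2).1.1)
        · exact mem_sup_right (hG.mono (by omega) (by omega) (he₀ j j.2).1.2)
      · rintro rfl
        exact Finsupp.mem_support_iff.mp hj hi
    have hsup : F i ⊔ G (n - 1 - i) ⊔ H 1 = F i ⊔ G (n - 1 - i) := by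
      rwa [hH1, sup_eq_left, span_singleton_le_iff_mem]
    have hrank := hT.finrank_sup hV hF hG hH (a := i) (b := n - 1 - i) (c := 0) (by omega)
    rw [hH.bot_eq, sup_bot_eq, ← hsup, hT i (n - 1 - i) 1 (by omega), finrank_top, hV] at hrank
    omega
  set e : ℕ → V := fun a => if ha : a < n then b.repr (h 0) ⟨a, ha⟩ • e₀ a else 0
  have he : ∀ a < n, e a ∈ F (a + 1) ⊓ G (n - a) ∧ e a ≠ 0 := fun a ha => by
    simp only [e, dif_pos ha]
    exact ⟨smul_mem _ _ (he₀ a ha).1, smul_ne_zero (hcoord _) (he₀ a ha).2⟩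
  obtain ⟨heF, heG⟩ := hT.adapted_of_mem_inf hV hF hG hH he
  refine ⟨e, heF, heG, ?_⟩
  rw [hH1, ← Fin.sum_univ_eq_sum_range]
  congr 2
  conv_lhs => rw [← b.sum_repr (h 0)]
  simp [e, hb]

end TransverseTriple

lemma exists_linearEquiv_map_flags_eq [FiniteDimensional ℝ V] (hV : finrank ℝ V = n)
    (hn : 0 < n)
    {F G H F' G' H' : ℕ → Submodule ℝ V}
    (hF : IsFlag n F) (hG : IsFlag n G) (hH : IsFlag n H)
    (hF' : IsFlag n F') (hG' : IsFlag n G') (hH' : IsFlag n H')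
    (hT : TransverseTriple n F G H) (hT' : TransverseTriple n F' G' H') :
    ∃ u : V ≃ₗ[ℝ] V, (∀ m ≤ n, Submodule.map (u : V →ₗ[ℝ] V) (F m) = F' m ∧
      Submodule.map (u : V →ₗ[ℝ] V) (G m) = G' m) ∧
      Submodule.map (u : V →ₗ[ℝ] V) (H 1) = H' 1 := by
  obtain ⟨e, heF, heG, heH⟩ := hT.exists_frame hV hn hF hG hH
  obtain ⟨e', heF', heG', heH'⟩ := hT'.exists_frame hV hn hF' hG' hH'
  obtain ⟨u, hu⟩ :=
    exists_linearEquiv_apply_eq hV (heF.top_le_span hV hF) (heF'.top_le_span hV hF')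
  refine ⟨u, fun m hm =>
    ⟨heF.map_eq heF' hu hm, heG.map_eq heG' (fun q _ => hu _ (by omega)) hm⟩, ?_⟩
  rw [heH, heH', map_span, image_singleton, map_sum]
  exact congrArg _ (congrArg _ (Finset.sum_congr rfl fun a ha => hu a (Finset.mem_range.mp ha)))

section Wedge

variable {f g h : ℕ → V} {a b c : ℕ}

lemma wedge_eq_apply_wedgeFamily (ω : AlternatingMap ℝ V ℝ (Fin n)) :
    wedge n ω f g h a b c = ω (wedgeFamily n f g h a b) := rfl

lemma wedge_congr {h' : ℕ → V} (ω : AlternatingMap ℝ V ℝ (Fin n))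
    (hh : ∀ q, a + b + q < n → h q = h' q) :
    wedge n ω f g h a b c = wedge n ω f g h' a b c := by
  rw [wedge_eq_apply_wedgeFamily, wedgeFamily_congr hh]
  rfl

lemma wedge_update_sub_smul (ω : AlternatingMap ℝ V ℝ (Fin n)) (hc : a + b + c < n)
    (x y : V) (s : ℝ) {d : ℕ} :
    wedge n ω f g (Function.update h c (x - s • y)) a b d =
      wedge n ω f g (Function.update h c x) a b d -
        s * wedge n ω f g (Function.update h c y) a b d := by
  simp only [wedge_eq_apply_wedgeFamily, wedgeFamily_update hc, ω.map_update_sub,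
    ω.map_update_smul, smul_eq_mul]

lemma AlternatingMap.apply_comp_eq_det_mul [FiniteDimensional ℝ V] (hV : finrank ℝ V = n)
    (ω : AlternatingMap ℝ V ℝ (Fin n)) (u : V →ₗ[ℝ] V) (v : Fin n → V) :
    ω (u ∘ v) = LinearMap.det u * ω v := by
  rw [ω.eq_smul_basis_det (finBasisOfFinrankEq ℝ V hV)]
  simp only [AlternatingMap.smul_apply, Basis.det_comp, smul_eq_mul]
  ring

lemma tripleRatio_comp [FiniteDimensional ℝ V] (hV : finrank ℝ V = n) (u : V ≃ₗ[ℝ] V)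
    (ω : AlternatingMap ℝ V ℝ (Fin n)) {i j k : ℕ} :
    tripleRatio n ω (u ∘ f) (u ∘ g) (u ∘ h) i j k = tripleRatio n ω f g h i j k := by
  have hwedge : ∀ a b c, wedge n ω (u ∘ f) (u ∘ g) (u ∘ h) a b c =
      LinearMap.det (u : V →ₗ[ℝ] V) * wedge n ω f g h a b c := fun a b c => by
    rw [wedge_eq_apply_wedgeFamily, wedgeFamily_comp, ← LinearEquiv.coe_coe,
      AlternatingMap.apply_comp_eq_det_mul hV]
    rfl
  simp only [tripleRatio, hwedge, mul_div_mul_left _ _ u.isUnit_det'.ne_zero]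

lemma wedge_ne_zero_of_top_le_sup [FiniteDimensional ℝ V] (hV : finrank ℝ V = n)
    {ω : AlternatingMap ℝ V ℝ (Fin n)} (hω : ω ≠ 0) (habc : a + b + c = n)
    (htop : ⊤ ≤ span ℝ (f '' Iio a) ⊔ span ℝ (g '' Iio b) ⊔ span ℝ (h '' Iio c)) :
    wedge n ω f g h a b c ≠ 0 := by
  have hspan : ⊤ ≤ span ℝ (range (wedgeFamily n f g h a b)) := by
    rwa [range_wedgeFamily habc, span_union, span_union]
  rw [wedge_eq_apply_wedgeFamily, ← coe_basisOfTopLeSpanOfCardEqFinrank _ hspan (by simp [hV])]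
  exact (ω.map_basis_ne_zero_iff _).mpr hω

end Wedge

lemma exists_eq_mul_of_div_succ_eq {x y : ℕ → ℝ} {N : ℕ} (hx : ∀ a ≤ N, x a ≠ 0)
    (hy : ∀ a ≤ N, y a ≠ 0) (hxy : ∀ a < N, x (a + 1) / x a = y (a + 1) / y a) :
    ∃ t : ℝ, ∀ a ≤ N, y a = t * x a := by
  refine ⟨y 0 / x 0, fun a ha => ?_⟩
  induction a with
  | zero => field_simp [hx 0 ha]
  | succ a ih =>
    have h := hxy a ha
    rw [div_eq_div_iff (hx a (by omega)) (hy a (by omega)), ih (by omega)] at h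
    exact mul_right_cancel₀ (hx a (by omega)) (by linear_combination -h)

namespace TransverseTriple

variable [FiniteDimensional ℝ V] {F G H : ℕ → Submodule ℝ V} {f g h : ℕ → V}
  {ω : AlternatingMap ℝ V ℝ (Fin n)}

lemma wedge_ne_zero (hV : finrank ℝ V = n) (hT : TransverseTriple n F G H)
    (hf : Adapted n F f) (hg : Adapted n G g) (hh : Adapted n H h) (hω : ω ≠ 0) {a b c : ℕ}
    (habc : a + b + c = n) : wedge n ω f g h a b c ≠ 0 :=
  wedge_ne_zero_of_top_le_sup hV hω habc
    (by rw [← hf a (by omega), ← hg b (by omega), ← hh c (by omega), hT a b c habc])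

lemma mem_sup_of_wedge_update_eq_zero (hV : finrank ℝ V = n) (hF : IsFlag n F)
    (hG : IsFlag n G) (hH : IsFlag n H) (hT : TransverseTriple n F G H)
    (hf : Adapted n F f) (hg : Adapted n G g) (hh : Adapted n H h) (hω : ω ≠ 0)
    {a b m : ℕ} (habm : a + b + m + 1 = n) {x : V}
    (hx : wedge n ω f g (Function.update h m x) a b (m + 1) = 0) : x ∈ F a ⊔ G b ⊔ H m := by
  by_contra hx'
  refine wedge_ne_zero_of_top_le_sup hV hω (a := a) (b := b) (c := m + 1) (by omega) ?_ hx
  have himage : Function.update h m x '' Iio (m + 1) = insert x (h '' Iio m) := by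
    rw [Iio_add_one_eq_Iic, ← Iio_insert, image_insert_eq, Function.update_self]
    exact congrArg _ (image_congr fun q hq => Function.update_of_ne (ne_of_lt hq) _ _)
  have hrank : finrank ℝ ↥(F a ⊔ G b ⊔ H m ⊔ span ℝ {x}) = finrank ℝ V := by
    rw [finrank_sup_span_singleton hx', hT.finrank_sup hV hF hG hH (by omega), hV]
    omega
  rw [himage, span_insert, ← hf a (by omega), ← hg b (by omega), ← hh m (by omega),
    sup_comm (span ℝ {x}), ← sup_assoc, eq_top_of_finrank_eq hrank]

lemma div_wedge_eq_of_tripleRatio_eq (hV : finrank ℝ V = n) (hT : TransverseTriple n F G H)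
    (hf : Adapted n F f) (hg : Adapted n G g) (hh : Adapted n H h) (hω : ω ≠ 0) {h' : ℕ → V}
    {i j k : ℕ} (hh' : EqOn h h' (Iio k)) (hi : 1 ≤ i) (hj : 1 ≤ j) (hk : 1 ≤ k)
    (hijk : i + j + k = n) (hratio : tripleRatio n ω f g h i j k = tripleRatio n ω f g h' i j k) :
    wedge n ω f g h i (j - 1) (k + 1) / wedge n ω f g h (i - 1) j (k + 1) =
      wedge n ω f g h' i (j - 1) (k + 1) / wedge n ω f g h' (i - 1) j (k + 1) := by
  have hlow : ∀ a b c, n ≤ a + b + k → wedge n ω f g h' a b c = wedge n ω f g h a b c :=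
    fun a b c hab => (wedge_congr ω fun q hq => hh' (show q < k by omega)).symm
  unfold tripleRatio at hratio
  rw [hlow (i + 1) j (k - 1) (by omega), hlow (i + 1) (j - 1) k (by omega),
    hlow (i - 1) (j + 1) k (by omega), hlow i (j + 1) (k - 1) (by omega)] at hratio
  refine mul_left_cancel₀ (mul_ne_zero ?_ ?_) hratio <;>
    exact div_ne_zero (hT.wedge_ne_zero hV hf hg hh hω (by omega))
      (hT.wedge_ne_zero hV hf hg hh hω (by omega))

end TransverseTriple

section Rigidity

variable [FiniteDimensional ℝ V] {F G H H' : ℕ → Submodule ℝ V}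

lemma flag_succ_eq_of_tripleRatio_eq (hV : finrank ℝ V = n) (hF : IsFlag n F) (hG : IsFlag n G)
    (hH : IsFlag n H) (hH' : IsFlag n H') (hT : TransverseTriple n F G H)
    (hT' : TransverseTriple n F G H') {m : ℕ} (hm : 1 ≤ m) (hmn : m + 2 ≤ n)
    (hle : ∀ l ≤ m, H l = H' l)
    (hratio : ∀ (ω : AlternatingMap ℝ V ℝ (Fin n)) (f g h h' : ℕ → V), ω ≠ 0 →
      Adapted n F f → Adapted n G g → Adapted n H h → Adapted n H' h' →
      ∀ i j k : ℕ, 1 ≤ i → 1 ≤ j → 1 ≤ k → i + j + k = n →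
        tripleRatio n ω f g h i j k = tripleRatio n ω f g h' i j k) :
    H (m + 1) = H' (m + 1) := by
  set ω := (finBasisOfFinrankEq ℝ V hV).det
  have hω : ω ≠ 0 := Basis.det_ne_zero _
  obtain ⟨f, hf⟩ := hF.exists_adapted
  obtain ⟨g, hg⟩ := hG.exists_adapted
  obtain ⟨h, hh⟩ := hH.exists_adapted
  obtain ⟨h', hh', hagree⟩ := hH.exists_adapted_eqOn hH' hle hh
  set N := n - m - 1
  obtain ⟨t, ht⟩ : ∃ t : ℝ, ∀ a ≤ N,
      wedge n ω f g h' a (N - a) (m + 1) = t * wedge n ω f g h a (N - a) (m + 1) := by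
    refine exists_eq_mul_of_div_succ_eq (fun a ha => hT.wedge_ne_zero hV hf hg hh hω (by omega))
      (fun a ha => hT'.wedge_ne_zero hV hf hg hh' hω (by omega)) fun a ha => ?_
    have := hT.div_wedge_eq_of_tripleRatio_eq hV hf hg hh hω hagree (i := a + 1) (j := N - a)
      (by omega) (by omega) hm (by omega)
      (hratio ω f g h h' hω hf hg hh hh' _ _ _ (by omega) (by omega) hm (by omega))
    simpa [show N - a - 1 = N - (a + 1) by omega] using this
  have hz : h' m - t • h m ∈ H m := by
    refine hT.mem_of_forall_mem_sup hV hF hG hH (N := N) (by omega) fun a ha => ?_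
    refine hT.mem_sup_of_wedge_update_eq_zero hV hF hG hH hf hg hh hω (b := N - a) (by omega) ?_
    rw [wedge_update_sub_smul ω (by omega), Function.update_eq_self,
      wedge_congr (h' := h') ω fun q hq => ?_, ht a ha, sub_self]
    rcases eq_or_ne q m with rfl | hqm
    · exact Function.update_self _ _ _
    · rw [Function.update_of_ne hqm, hagree (show q < m by omega)]
  have hmem : h' m ∈ H (m + 1) := by
    simpa using add_mem (hH.1 m (by omega) hz)
      (smul_mem _ t (hH.adapted_iff.mp hh m (by omega)).1)
  refine (eq_of_le_of_finrank_eq ?_ (by rw [hH'.2 _ (by omega), hH.2 _ (by omega)])).symm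
  rw [hh' (m + 1) (by omega), Iio_add_one_eq_Iic, ← Iio_insert, image_insert_eq, span_insert,
    ← hh' m (by omega), ← hle m le_rfl]
  exact sup_le ((span_singleton_le_iff_mem _ _).mpr hmem) (hH.1 m (by omega))

theorem flag_eq_of_tripleRatio_eq (hV : finrank ℝ V = n) (hF : IsFlag n F) (hG : IsFlag n G)
    (hH : IsFlag n H) (hH' : IsFlag n H') (hT : TransverseTriple n F G H)
    (hT' : TransverseTriple n F G H') (h1 : H 1 = H' 1)
    (hratio : ∀ (ω : AlternatingMap ℝ V ℝ (Fin n)) (f g h h' : ℕ → V), ω ≠ 0 →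
      Adapted n F f → Adapted n G g → Adapted n H h → Adapted n H' h' →
      ∀ i j k : ℕ, 1 ≤ i → 1 ≤ j → 1 ≤ k → i + j + k = n →
        tripleRatio n ω f g h i j k = tripleRatio n ω f g h' i j k) :
    ∀ m ≤ n, H m = H' m := by
  intro m
  induction m using Nat.strong_induction_on with
  | _ m ih =>
    intro hm
    rcases m with _ | _ | m
    · rw [hH.bot_eq, hH'.bot_eq]
    · exact h1
    · rcases hm.eq_or_lt with hmn | hmn
      · rw [hmn, hH.top_eq hV, hH'.top_eq hV]
      · exact flag_succ_eq_of_tripleRatio_eq hV hF hG hH hH' hT hT' (m := m + 1) (by omega)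
          (by omega) (fun l hl => ih l (by omega) (by omega)) hratio

end Rigidity

end

theorem statement16 (n : ℕ) (V : Type*) [AddCommGroup V] [Module ℝ V] [FiniteDimensional ℝ V]
    (hV : Module.finrank ℝ V = n)
    (F G H F' G' H' : ℕ → Submodule ℝ V)
    (hF : IsFlag n F) (hG : IsFlag n G) (hH : IsFlag n H)
    (hF' : IsFlag n F') (hG' : IsFlag n G') (hH' : IsFlag n H')
    (hFGH : TransverseTriple n F G H) (hFGH' : TransverseTriple n F' G' H')
    (hratio : ∀ (ω : AlternatingMap ℝ V ℝ (Fin n)) (f g h f' g' h' : ℕ → V),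
      ω ≠ 0 → Adapted n F f → Adapted n G g → Adapted n H h →
      Adapted n F' f' → Adapted n G' g' → Adapted n H' h' →
      ∀ i j k : ℕ, 1 ≤ i → 1 ≤ j → 1 ≤ k → i + j + k = n →
        tripleRatio n ω f g h i j k = tripleRatio n ω f' g' h' i j k) :
    ∃ u : V ≃ₗ[ℝ] V, ∀ m, m ≤ n →
      Submodule.map (u : V →ₗ[ℝ] V) (F m) = F' m ∧ Submodule.map (u : V →ₗ[ℝ] V) (G m) = G' m ∧
      Submodule.map (u : V →ₗ[ℝ] V) (H m) = H' m := by
  rcases Nat.eq_zero_or_pos n with rfl | hn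
  · refine ⟨LinearEquiv.refl ℝ V, fun m hm => ?_⟩
    obtain rfl := Nat.le_zero.mp hm
    simp [hF.bot_eq, hG.bot_eq, hH.bot_eq, hF'.bot_eq, hG'.bot_eq, hH'.bot_eq]
  obtain ⟨u, huFG, huH⟩ :=
    exists_linearEquiv_map_flags_eq hV hn hF hG hH hF' hG' hH' hFGH hFGH'
  have huF : ∀ m ≤ n, Submodule.map (u : V →ₗ[ℝ] V) (F m) = F' m := fun m hm =>
    (huFG m hm).1
  have huG : ∀ m ≤ n, Submodule.map (u : V →ₗ[ℝ] V) (G m) = G' m := fun m hm =>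
    (huFG m hm).2
  have huH' := flag_eq_of_tripleRatio_eq hV hF' hG' (hH.map u) hH'
    (hFGH.of_map_eq u huF huG fun _ _ => rfl) hFGH' huH
    fun ω f g h h' hω hf hg hh hh' i j k hi hj hk hijk => by
      rw [← tripleRatio_comp hV u.symm]
      exact hratio ω _ _ _ f g h' hω (hf.symm_comp u huF) (hg.symm_comp u huG)
        (hh.symm_comp u fun _ _ => rfl) hf hg hh' i j k hi hj hk hijk
  exact ⟨u, fun m hm => ⟨huF m hm, huG m hm, huH' m hm⟩⟩
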